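/- For every integer n ≥ 1, the sum of area(w) over all strict Dyck paths w of length 2n equals 4^{n−1}. -/

import Mathlib

open Finset

/-- Height after `i` steps of the walk `s`, starting at height `a`. -/
def height {n : ℕ} (a : ℤ) (s : Fin n → ℤ) (i : ℕ) : ℤ :=
  a + ∑ j ∈ Finset.univ.filter (fun j : Fin n => (j : ℕ) < i), s j

/-- The area under a path: the sum of its intermediate heights h_1 + ⋯ + h_{n−1}. -/
def area {n : ℕ} (s : Fin n → ℤ) : ℤ :=
  ∑ i ∈ Finset.Ico 1 n, height 0 s i

open scoped Classical in
/-- Dyck paths of length `n`. -/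
noncomputable def dyckPaths (n : ℕ) : Finset (Fin n → ℤ) :=
  (Fintype.piFinset fun _ => ({1, -1} : Finset ℤ)).filter
    (fun s => (∀ i ∈ Finset.Icc 1 n, 0 ≤ height 0 s i) ∧ height 0 s n = 0)

open scoped Classical in
/-- Strict Dyck paths of length `n`: Dyck paths with h_i > 0 for all 0 < i < n. -/
noncomputable def strictDyckPaths (n : ℕ) : Finset (Fin n → ℤ) :=
  (dyckPaths n).filter (fun s => ∀ i ∈ Finset.Ioo 0 n, 0 < height 0 s i)

/-!
A strict Dyck path of length `2(m+1)` is a Dyck word of semilength `m` wrapped in one pair of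
brackets, and the wrapping raises the area by `2m+1`. Splitting a Dyck word at its first return,
`p = q.nest + r`, shows that the total area `A m` of the `C m` Dyck words of semilength `m` obeys
`A (m+1) = ∑_{i+j=m} (C j * (A i + (2i+1) C i) + C i * A j)`, whose solution is
`A m = 4^m - (2m+1) C m`; the only nontrivial input is the convolution
`2 ∑_{i+j=m} 4^i C j = 4^(m+1) - binom(2m+2, m+1)`. So the strict paths have total area
`A m + (2m+1) C m = 4^m`.
-/

open DyckStep

theorem centralBinom_succ_eq_four_mul_sub_two_mul_catalan (n : ℕ) :
    ((n + 1).centralBinom : ℤ) = 4 * n.centralBinom - 2 * catalan n := by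
  have hB : ((n + 1 : ℕ) : ℤ) * (n + 1).centralBinom = 2 * (2 * n + 1) * n.centralBinom := by
    exact_mod_cast Nat.succ_mul_centralBinom_succ n
  have hC : ((n + 1 : ℕ) : ℤ) * catalan n = n.centralBinom := by
    exact_mod_cast succ_mul_catalan_eq_centralBinom n
  apply mul_left_cancel₀ (show ((n + 1 : ℕ) : ℤ) ≠ 0 by positivity)
  rw [hB, mul_sub, mul_left_comm _ 2, hC]
  push_cast
  ring

theorem two_mul_sum_antidiagonal_four_pow_mul_catalan (m : ℕ) :
    2 * ∑ ij ∈ antidiagonal m, (4 : ℤ) ^ ij.1 * catalan ij.2 =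
      4 ^ (m + 1) - (m + 1).centralBinom := by
  induction m with
  | zero => simp [Nat.centralBinom]
  | succ m ih =>
    simp only [Nat.sum_antidiagonal_succ, centralBinom_succ_eq_four_mul_sub_two_mul_catalan,
      pow_succ' (4 : ℤ), mul_assoc, ← mul_sum] at ih ⊢
    linear_combination 4 * ih

theorem sum_antidiagonal_odd_mul_catalan_mul_catalan (m : ℕ) :
    ∑ ij ∈ antidiagonal m, (2 * ij.2 + 1 : ℤ) * (catalan ij.1 * catalan ij.2) =
      (m + 1) * catalan (m + 1) := by
  have hswap : ∑ ij ∈ antidiagonal m, (2 * ij.2 + 1 : ℤ) * (catalan ij.1 * catalan ij.2) =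
      ∑ ij ∈ antidiagonal m, (2 * ij.1 + 1 : ℤ) * (catalan ij.1 * catalan ij.2) := by
    rw [← Nat.sum_antidiagonal_swap]
    exact sum_congr rfl fun _ _ => by simp only [Prod.fst_swap, Prod.snd_swap]; ring
  have hsum : ∑ ij ∈ antidiagonal m, (2 * ij.2 + 1 : ℤ) * (catalan ij.1 * catalan ij.2) +
      ∑ ij ∈ antidiagonal m, (2 * ij.1 + 1 : ℤ) * (catalan ij.1 * catalan ij.2) =
      2 * ((m + 1) * catalan (m + 1)) := by
    rw [← sum_add_distrib, catalan_succ', Nat.cast_sum, mul_sum, mul_sum]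
    refine sum_congr rfl fun ij hij => ?_
    rw [← HasAntidiagonal.mem_antidiagonal.1 hij]
    push_cast
    ring
  linarith

def stepHeight (l : List DyckStep) (i : ℕ) : ℤ :=
  (l.take i).count U - (l.take i).count D

@[simp] lemma stepHeight_zero (l : List DyckStep) : stepHeight l 0 = 0 := by
  simp [stepHeight]

lemma stepHeight_append (l₁ l₂ : List DyckStep) (i : ℕ) :
    stepHeight (l₁ ++ l₂) i = stepHeight l₁ i + stepHeight l₂ (i - l₁.length) := by
  simp only [stepHeight, List.take_append, List.count_append]
  push_cast
  ring

namespace DyckWord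

variable (p q : DyckWord)

lemma stepHeight_nonneg (i : ℕ) : 0 ≤ stepHeight p.toList i :=
  sub_nonneg.2 (mod_cast p.count_D_le_count_U i)

lemma stepHeight_of_length_le {i : ℕ} (h : p.toList.length ≤ i) : stepHeight p.toList i = 0 := by
  rw [stepHeight, List.take_of_length_le h, p.count_U_eq_count_D, sub_self]

lemma stepHeight_nest_succ {i : ℕ} (h : i ≤ p.toList.length) :
    stepHeight p.nest.toList (i + 1) = 1 + stepHeight p.toList i := by
  change stepHeight (U :: (p.toList ++ [D])) (i + 1) = _
  rw [stepHeight, List.take_succ_cons, List.take_append_of_le_length h, stepHeight]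
  simp only [List.count_cons_self, ne_eq, reduceCtorEq, not_false_eq_true, List.count_cons_of_ne]
  push_cast
  ring

def area : ℤ := ∑ i ∈ range p.toList.length, stepHeight p.toList i

lemma area_add : (p + q).area = p.area + q.area := by
  change ∑ i ∈ range (p.toList ++ q.toList).length, stepHeight (p.toList ++ q.toList) i = _
  simp only [List.length_append, sum_range_add, stepHeight_append, Nat.add_sub_cancel_left,
    stepHeight_of_length_le p (Nat.le_add_right _ _), zero_add]
  rw [sum_congr rfl fun i hi => by
    rw [Nat.sub_eq_zero_of_le (mem_range.1 hi).le, stepHeight_zero, add_zero]]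
  rfl

lemma area_nest : p.nest.area = p.area + 2 * p.semilength + 1 := by
  have hlen : p.nest.toList.length = p.toList.length + 1 + 1 := by simp [nest]
  rw [area, hlen, sum_range_succ', sum_congr rfl fun i hi =>
    stepHeight_nest_succ p (Nat.lt_succ_iff.1 (mem_range.1 hi)), sum_add_distrib,
    sum_range_succ (stepHeight p.toList), stepHeight_of_length_le p le_rfl, stepHeight_zero,
    sum_const, card_range, nsmul_one, area, ← p.two_mul_semilength_eq_length]
  push_cast
  ring

lemma nest_injective : Function.Injective nest := fun p q h => by
  simpa only [insidePart_nest] using congrArg insidePart h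

lemma length_nest : p.nest.toList.length = 2 * (p.semilength + 1) := by
  rw [← semilength_nest, two_mul_semilength_eq_length]

section FirstReturn

open BinaryTree

variable {M : Type*} [AddCommMonoid M]

lemma sum_semilength_eq_sum_trees (m : ℕ) (f : DyckWord → M) :
    ∑ p : {p : DyckWord // p.semilength = m}, f p = ∑ t ∈ treesOfNumNodesEq m, f (ofTree t) := by
  rw [← sum_coe_sort (treesOfNumNodesEq m)]
  exact Fintype.sum_equiv (equivTreesOfNumNodesEq m) _ _
    fun p => by simp [equivTreesOfNumNodesEq_apply_coe, ofTree_toTree]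

lemma sum_semilength_succ (m : ℕ) (f : DyckWord → M) :
    ∑ p : {p : DyckWord // p.semilength = m + 1}, f p =
      ∑ ij ∈ antidiagonal m, ∑ q : {q : DyckWord // q.semilength = ij.1},
        ∑ r : {r : DyckWord // r.semilength = ij.2}, f (q.1.nest + r) := by
  rw [sum_semilength_eq_sum_trees, treesOfNumNodesEq_succ, sum_biUnion]
  · refine sum_congr rfl fun ij _ => ?_
    rw [sum_map, sum_product, sum_semilength_eq_sum_trees ij.1
      fun q => ∑ r : {r : DyckWord // r.semilength = ij.2}, f (q.nest + r)]
    exact sum_congr rfl fun t _ =>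
      (sum_semilength_eq_sum_trees _ fun r => f ((ofTree t).nest + r)).symm
  · simp_rw [Set.PairwiseDisjoint, Set.Pairwise, disjoint_left]
    aesop

end FirstReturn

noncomputable def totalArea (m : ℕ) : ℤ := ∑ p : {p : DyckWord // p.semilength = m}, p.1.area

lemma totalArea_zero : totalArea 0 = 0 := by
  rw [totalArea, sum_semilength_eq_sum_trees, BinaryTree.treesOfNumNodesEq_zero, sum_singleton]
  rfl

lemma totalArea_succ (m : ℕ) :
    totalArea (m + 1) = ∑ ij ∈ antidiagonal m,
      (catalan ij.2 * (totalArea ij.1 + (2 * ij.1 + 1) * catalan ij.1) +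
        catalan ij.1 * totalArea ij.2) := by
  rw [totalArea, sum_semilength_succ]
  refine sum_congr rfl fun ij _ => ?_
  have hsplit (q : {q : DyckWord // q.semilength = ij.1}) (r : DyckWord) :
      (q.1.nest + r).area = q.1.area + (2 * ij.1 + 1) + r.area := by
    rw [area_add, area_nest, q.2, add_assoc q.1.area]
  simp only [hsplit, sum_add_distrib, sum_const, card_univ, card_dyckWord_semilength_eq_catalan,
    nsmul_eq_mul, ← mul_sum, totalArea]
  ring

lemma totalArea_eq (m : ℕ) : totalArea m = 4 ^ m - (2 * m + 1) * catalan m := by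
  induction m using Nat.strong_induction_on with
  | _ m ih =>
    rcases m with _ | m
    · simp [totalArea_zero]
    have hterm : ∀ ij ∈ antidiagonal m,
        catalan ij.2 * (totalArea ij.1 + (2 * ij.1 + 1) * catalan ij.1) +
          catalan ij.1 * totalArea ij.2 =
        (4 : ℤ) ^ ij.1 * catalan ij.2 + 4 ^ ij.2 * catalan ij.1 -
          (2 * ij.2 + 1) * (catalan ij.1 * catalan ij.2) := by
      intro ij hij
      have hm := HasAntidiagonal.mem_antidiagonal.1 hij
      rw [ih ij.1 (by omega), ih ij.2 (by omega)]
      ring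
    have hswap : ∑ ij ∈ antidiagonal m, (4 : ℤ) ^ ij.2 * catalan ij.1 =
        ∑ ij ∈ antidiagonal m, (4 : ℤ) ^ ij.1 * catalan ij.2 :=
      Nat.sum_antidiagonal_swap (f := fun ij => (4 : ℤ) ^ ij.1 * catalan ij.2)
    rw [totalArea_succ, sum_congr rfl hterm, sum_sub_distrib, sum_add_distrib, hswap,
      sum_antidiagonal_odd_mul_catalan_mul_catalan, ← two_mul,
      two_mul_sum_antidiagonal_four_pow_mul_catalan, ← succ_mul_catalan_eq_centralBinom]
    push_cast
    ring

lemma sum_area_nest_eq_four_pow (m : ℕ) :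
    ∑ q : {q : DyckWord // q.semilength = m}, q.1.nest.area = 4 ^ m := by
  have hnest (q : {q : DyckWord // q.semilength = m}) :
      q.1.nest.area = q.1.area + (2 * m + 1) := by
    rw [area_nest, q.2, add_assoc]
  rw [Fintype.sum_congr _ _ hnest, sum_add_distrib, ← totalArea, totalArea_eq, sum_const,
    card_univ, card_dyckWord_semilength_eq_catalan, nsmul_eq_mul]
  ring

end DyckWord

namespace DyckStep

def toInt : DyckStep → ℤ
  | U => 1
  | D => -1

def ofInt (x : ℤ) : DyckStep := if x = 1 then U else D

lemma toInt_ofInt {x : ℤ} (h : x = 1 ∨ x = -1) : (ofInt x).toInt = x := by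
  rcases h with rfl | rfl <;> rfl

lemma toInt_injective : Function.Injective toInt := by
  intro a b h
  cases a <;> cases b <;> first | rfl | cases h

lemma toInt_eq_one_or_eq_neg_one (s : DyckStep) : s.toInt = 1 ∨ s.toInt = -1 := by
  cases s
  exacts [Or.inl rfl, Or.inr rfl]

end DyckStep

lemma sum_map_toInt (l : List DyckStep) : (l.map toInt).sum = l.count U - l.count D := by
  induction l with
  | nil => simp
  | cons s l ih =>
    cases s <;>
      simp only [List.map_cons, List.sum_cons, ih, toInt, List.count_cons_self,
        List.count_cons_of_ne, ne_eq, reduceCtorEq, not_false_eq_true] <;>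
      push_cast <;> ring

lemma stepHeight_eq_sum_take (l : List DyckStep) (i : ℕ) :
    stepHeight l i = ((l.map toInt).take i).sum := by
  rw [← List.map_take, sum_map_toInt, stepHeight]

lemma mem_dyckPaths {n : ℕ} {w : Fin n → ℤ} :
    w ∈ dyckPaths n ↔ (∀ i, w i = 1 ∨ w i = -1) ∧
      (∀ i ∈ Icc 1 n, 0 ≤ height 0 w i) ∧ height 0 w n = 0 := by
  simp [dyckPaths]

lemma mem_strictDyckPaths {n : ℕ} {w : Fin n → ℤ} :
    w ∈ strictDyckPaths n ↔ w ∈ dyckPaths n ∧ ∀ i ∈ Ioo 0 n, 0 < height 0 w i := by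
  simp [strictDyckPaths]

lemma height_eq_sum_take {n : ℕ} (s : Fin n → ℤ) (i : ℕ) :
    height 0 s i = ((List.ofFn s).take i).sum := by
  rw [height, zero_add, List.sum_take_ofFn]

lemma height_of_le {n : ℕ} (s : Fin n → ℤ) {i : ℕ} (h : n ≤ i) : height 0 s i = height 0 s n := by
  rw [height_eq_sum_take, height_eq_sum_take, List.take_of_length_le (by simpa),
    List.take_of_length_le (by simp)]

lemma height_nonneg_of_mem_dyckPaths {n : ℕ} {w : Fin n → ℤ} (hw : w ∈ dyckPaths n) (i : ℕ) :
    0 ≤ height 0 w i := by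
  obtain ⟨-, hnonneg, hend⟩ := mem_dyckPaths.1 hw
  rcases Nat.eq_zero_or_pos i with rfl | hi
  · simp [height]
  rcases le_or_gt i n with hin | hni
  · exact hnonneg i (mem_Icc.2 ⟨hi, hin⟩)
  · rw [height_of_le w hni.le, hend]

/-- Meaningful only when `l.length = N`: positions past the end of `l` read as `U`. -/
def walkOf (N : ℕ) (l : List DyckStep) : Fin N → ℤ := fun i => (l.getD i U).toInt

lemma ofFn_walkOf {N : ℕ} {l : List DyckStep} (h : l.length = N) :
    List.ofFn (walkOf N l) = l.map toInt := by
  subst h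
  refine List.ext_getElem (by simp) fun i _ hi => ?_
  simp [walkOf, List.getElem?_eq_getElem (by simpa using hi)]

lemma height_walkOf {N : ℕ} {l : List DyckStep} (h : l.length = N) (i : ℕ) :
    height 0 (walkOf N l) i = stepHeight l i := by
  rw [height_eq_sum_take, ofFn_walkOf h, stepHeight_eq_sum_take]

lemma walkOf_injOn {N : ℕ} {l₁ l₂ : List DyckStep} (h₁ : l₁.length = N) (h₂ : l₂.length = N)
    (h : walkOf N l₁ = walkOf N l₂) : l₁ = l₂ :=
  List.map_injective_iff.2 toInt_injective (by rw [← ofFn_walkOf h₁, ← ofFn_walkOf h₂, h])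

namespace DyckWord

variable {N : ℕ} {p : DyckWord}

lemma area_walkOf (h : p.toList.length = N) : _root_.area (walkOf N p.toList) = p.area := by
  rw [_root_.area, area, h, range_eq_Ico]
  rcases Nat.eq_zero_or_pos N with rfl | hN
  · rfl
  rw [sum_eq_sum_Ico_succ_bot hN, stepHeight_zero, zero_add]
  exact sum_congr rfl fun i _ => height_walkOf h i

lemma walkOf_mem_dyckPaths (h : p.toList.length = N) : walkOf N p.toList ∈ dyckPaths N := by
  refine mem_dyckPaths.2 ⟨fun i => toInt_eq_one_or_eq_neg_one _, fun i _ => ?_, ?_⟩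
  · rw [height_walkOf h]
    exact p.stepHeight_nonneg i
  · rw [height_walkOf h, p.stepHeight_of_length_le h.le]

lemma walkOf_mem_strictDyckPaths_iff (hN : 0 < N) (h : p.toList.length = N) :
    walkOf N p.toList ∈ strictDyckPaths N ↔ p.IsNested := by
  have hp : p ≠ 0 := by
    rintro rfl
    exact hN.ne h
  simp only [mem_strictDyckPaths, walkOf_mem_dyckPaths h, true_and, mem_Ioo, IsNested, hp,
    ne_eq, not_false_eq_true, height_walkOf h, stepHeight, sub_pos, Nat.cast_lt, h]
  exact ⟨fun H i h0 hi => H i ⟨h0, hi⟩, fun H i hi => H hi.1 hi.2⟩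

lemma exists_walkOf_eq {w : Fin N → ℤ} (hw : w ∈ dyckPaths N) :
    ∃ p : DyckWord, p.toList.length = N ∧ walkOf N p.toList = w := by
  have hstep := (mem_dyckPaths.1 hw).1
  set l := List.ofFn fun i => ofInt (w i)
  have hlen : l.length = N := List.length_ofFn
  have hheight (i : ℕ) : stepHeight l i = height 0 w i := by
    rw [stepHeight_eq_sum_take, height_eq_sum_take, List.map_ofFn]
    simp only [Function.comp_def, toInt_ofInt (hstep _)]
  have hbalance : l.count U = l.count D := by
    have := hheight N
    rw [(mem_dyckPaths.1 hw).2.2, stepHeight, List.take_of_length_le hlen.le] at this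
    omega
  have hprefix (i : ℕ) : (l.take i).count D ≤ (l.take i).count U := by
    have := (hheight i).trans_ge (height_nonneg_of_mem_dyckPaths hw i)
    rw [stepHeight] at this
    omega
  refine ⟨⟨l, hbalance, hprefix⟩, hlen, funext fun i => ?_⟩
  simp [walkOf, l, toInt_ofInt (hstep i)]

end DyckWord

open DyckWord in
lemma sum_area_strictDyckPaths (m : ℕ) :
    ∑ w ∈ strictDyckPaths (2 * (m + 1)), area w =
      ∑ q : {q : DyckWord // q.semilength = m}, q.1.nest.area := by
  have hN : 0 < 2 * (m + 1) := by omega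
  have hlen (q : {q : DyckWord // q.semilength = m}) :
      q.1.nest.toList.length = 2 * (m + 1) := by
    rw [length_nest, q.2]
  symm
  refine sum_bij (fun q _ => walkOf (2 * (m + 1)) q.1.nest.toList)
    (fun q _ => (walkOf_mem_strictDyckPaths_iff hN (hlen q)).2 .nest)
    (fun q₁ _ q₂ _ h =>
      Subtype.ext (nest_injective (DyckWord.ext (walkOf_injOn (hlen q₁) (hlen q₂) h))))
    (fun w hw => ?_) (fun q _ => (area_walkOf (hlen q)).symm)
  obtain ⟨p, hp, rfl⟩ := exists_walkOf_eq (mem_strictDyckPaths.1 hw).1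
  have hnested : p.IsNested := (walkOf_mem_strictDyckPaths_iff hN hp).1 hw
  have hsemilength : (p.denest hnested).semilength = m := by
    have h1 := congrArg semilength (p.nest_denest hnested)
    have h2 := p.two_mul_semilength_eq_length
    rw [semilength_nest] at h1
    omega
  exact ⟨⟨p.denest hnested, hsemilength⟩, mem_univ _, by rw [nest_denest]⟩

/-- Shapiro–Rogers–Woan: for n ≥ 1, the sum of the areas of the
strict Dyck paths of length 2n equals 4^{n−1}. -/
theorem stmt16 (n : ℕ) (hn : 1 ≤ n) :
    ∑ w ∈ strictDyckPaths (2 * n), area w = 4 ^ (n - 1) := by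
  obtain ⟨m, rfl⟩ := Nat.exists_eq_add_of_le' hn
  rw [sum_area_strictDyckPaths, DyckWord.sum_area_nest_eq_four_pow, Nat.add_sub_cancel]
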